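/- The contortion tensor decomposes into its spatial part and the kinematic quantities of the preferred frame as K_{abc} = ⊥K_{abc} + 2 v̇_{[a} v_{b]} v_c + 2 v_{[a} σ_{b]c} + (2/3) θ v_{[a} h_{b]c} − κ_{ab} v_c + 2 v_{[a} Ω_{b]c}, where ⊥K_{abc} := h_a^d h_b^e h_c^f K_{def}, v̇_a := K_{abc} v^b v^c, Ω_{ab} := −K_{c[ab]} v^c − v_{[a} K_{b]cd} v^c v^d, θ_{ab} := −K_{c(ab)} v^c + v_{(a} K_{b)cd} v^c v^d, θ := η^{ab} θ_{ab}, σ_{ab} := θ_{ab} − (1/3)θ h_{ab}, and κ_{ab} := K_{abc} v^c − 2 v_{[a} K_{b]cd} v^c v^d. -/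

import Mathlib

/-!
Since `h_a^b = δ_a^b + v_a v^b`, expanding `⊥K` multilinearly writes it as `K` plus terms built
from the contractions `K_{vbc}`, `K_{abv}` and `v̇`; antisymmetry kills `K_{vvc}` and turns a
contraction in the middle slot into minus one in the first slot. On the kinematic side,
`θ_{ab} + Ω_{ab} = −K_{vab} + v_b v̇_a` and `σ_{ab} + (θ/3) h_{ab} = θ_{ab}`, so the expansion and the
shear drop out, and the remaining terms cancel against the expansion of `⊥K`.
-/

open Finset

noncomputable section

/- Index set {0,1,2,3}. -/
abbrev Idx := Fin 4

/-- The Minkowski metric η_{ab} = diag(−1,1,1,1) (which equals its inverse η^{ab}). -/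
def ηm (a b : Idx) : ℝ := if a = b then (if a = (0 : Idx) then -1 else 1) else 0

/-- Lowered components of a vector: v_a = η_{ab} v^b. -/
def lo (v : Idx → ℝ) (a : Idx) : ℝ := ∑ b, ηm a b * v b

/-- Mixed projection tensor h_a^b = δ_a^b + v_a v^b. -/
def hmix (v : Idx → ℝ) (a b : Idx) : ℝ := (if a = b then 1 else 0) + lo v a * v b

/-- Fully lowered projection tensor h_{ab} = η_{ab} + v_a v_b. -/
def hlo (v : Idx → ℝ) (a b : Idx) : ℝ := ηm a b + lo v a * lo v b

/- Rank-3 tensors (all indices lowered). -/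
abbrev T3 := Idx → Idx → Idx → ℝ

/-- The covariant derivative of the preferred vector field: ∇_a v_b := K_{bca} v^c. -/
def nab (K : T3) (v : Idx → ℝ) (a b : Idx) : ℝ := ∑ c, K b c a * v c

/-- The acceleration v̇_a = K_{abc} v^b v^c. -/
def vdot (K : T3) (v : Idx → ℝ) (a : Idx) : ℝ := ∑ b, ∑ c, K a b c * v b * v c

/-- The vorticity Ω_{ab} = −K_{c[ab]} v^c − v_{[a} K_{b]cd} v^c v^d. -/
def vort (K : T3) (v : Idx → ℝ) (a b : Idx) : ℝ :=
  -(∑ c, ((K c a b - K c b a) / 2) * v c)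
    - (lo v a * vdot K v b - lo v b * vdot K v a) / 2

/-- The deformation tensor θ_{ab} = −K_{c(ab)} v^c + v_{(a} K_{b)cd} v^c v^d. -/
def deform (K : T3) (v : Idx → ℝ) (a b : Idx) : ℝ :=
  -(∑ c, ((K c a b + K c b a) / 2) * v c)
    + (lo v a * vdot K v b + lo v b * vdot K v a) / 2

/-- The expansion θ = η^{ab} θ_{ab}. -/
def expans (K : T3) (v : Idx → ℝ) : ℝ := ∑ a, ∑ b, ηm a b * deform K v a b

/-- The trace-free shear σ_{ab} = θ_{ab} − (1/3) θ h_{ab}. -/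
def shear (K : T3) (v : Idx → ℝ) (a b : Idx) : ℝ :=
  deform K v a b - (1 / 3) * expans K v * hlo v a b

/-- The spin rotation κ_{ab} = K_{abc} v^c − 2 v_{[a} K_{b]cd} v^c v^d. -/
def spinrot (K : T3) (v : Idx → ℝ) (a b : Idx) : ℝ :=
  (∑ c, K a b c * v c) - (lo v a * vdot K v b - lo v b * vdot K v a)

/-- The spatial part of the contortion tensor ⊥K_{abc} = h_a^d h_b^e h_c^f K_{def}. -/
def perpK (K : T3) (v : Idx → ℝ) (a b c : Idx) : ℝ :=
  ∑ d, ∑ e, ∑ f, hmix v a d * hmix v b e * hmix v c f * K d e f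

def contractFirst (K : T3) (v : Idx → ℝ) (b c : Idx) : ℝ := ∑ d, K d b c * v d

def contractLast (K : T3) (v : Idx → ℝ) (a b : Idx) : ℝ := ∑ c, K a b c * v c

lemma sum_hmix_mul (v : Idx → ℝ) (a : Idx) (F : Idx → ℝ) :
    ∑ d, hmix v a d * F d = F a + lo v a * ∑ d, F d * v d := by
  simp only [hmix, add_mul, sum_add_distrib, ite_mul, one_mul, zero_mul, sum_ite_eq,
    mem_univ, if_true, mul_sum]
  congr 1
  exact sum_congr rfl fun d _ => by ring

lemma sum_contractLast_mul (K : T3) (v : Idx → ℝ) (a : Idx) :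
    ∑ b, contractLast K v a b * v b = vdot K v a := by
  simp only [contractLast, vdot, sum_mul]
  exact sum_congr rfl fun b _ => sum_congr rfl fun c _ => by ring

section Antisymmetric

variable {K : T3} {v : Idx → ℝ}

lemma sum_mul_second_eq_neg_contractFirst (hK : ∀ a b c, K a b c = -K b a c) (a c : Idx) :
    ∑ b, K a b c * v b = -contractFirst K v a c := by
  simp only [contractFirst, ← sum_neg_distrib, hK a, neg_mul]

lemma sum_contractFirst_mul_eq_zero (hK : ∀ a b c, K a b c = -K b a c) (c : Idx) :
    ∑ b, contractFirst K v b c * v b = 0 := by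
  have h : ∑ b, contractFirst K v b c * v b = -∑ a, contractFirst K v a c * v a := by
    calc ∑ b, contractFirst K v b c * v b = ∑ a, (∑ b, K a b c * v b) * v a := by
          simp only [contractFirst, sum_mul]
          rw [sum_comm]
          exact sum_congr rfl fun a _ => sum_congr rfl fun b _ => by ring
      _ = -∑ a, contractFirst K v a c * v a := by
          simp only [sum_mul_second_eq_neg_contractFirst hK, neg_mul, sum_neg_distrib]
  linarith

lemma sum_contractLast_mul_first (hK : ∀ a b c, K a b c = -K b a c) (b : Idx) :
    ∑ a, contractLast K v a b * v a = -vdot K v b := by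
  rw [← sum_contractLast_mul]
  simp only [contractLast, sum_mul, ← sum_neg_distrib]
  exact sum_congr rfl fun a _ => sum_congr rfl fun c _ => by rw [hK]; ring

lemma sum_vdot_mul_eq_zero (hK : ∀ a b c, K a b c = -K b a c) :
    ∑ a, vdot K v a * v a = 0 := by
  have h : ∑ a, vdot K v a * v a = -∑ b, vdot K v b * v b := by
    calc ∑ a, vdot K v a * v a = ∑ b, (∑ a, contractLast K v a b * v a) * v b := by
          simp only [← sum_contractLast_mul, sum_mul]
          rw [sum_comm]
          exact sum_congr rfl fun a _ => sum_congr rfl fun b _ => by ring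
      _ = -∑ b, vdot K v b * v b := by
          simp only [sum_contractLast_mul_first hK, neg_mul, sum_neg_distrib]
  linarith

lemma perpK_eq (hK : ∀ a b c, K a b c = -K b a c) (a b c : Idx) :
    perpK K v a b c = K a b c + lo v a * contractFirst K v b c - lo v b * contractFirst K v a c
      + lo v c * contractLast K v a b - lo v a * lo v c * vdot K v b
      + lo v b * lo v c * vdot K v a := by
  have hf : ∀ d e, ∑ f, hmix v c f * K d e f = K d e c + lo v c * contractLast K v d e :=
    fun d e => sum_hmix_mul v c _
  have he : ∀ d, ∑ e, hmix v b e * (K d e c + lo v c * contractLast K v d e)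
      = K d b c + lo v c * contractLast K v d b
        + lo v b * (lo v c * vdot K v d - contractFirst K v d c) := by
    intro d
    rw [sum_hmix_mul]
    simp only [add_mul, sum_add_distrib, mul_assoc, ← mul_sum]
    rw [sum_contractLast_mul, sum_mul_second_eq_neg_contractFirst hK]
    ring
  have hd : ∑ d, hmix v a d * (K d b c + lo v c * contractLast K v d b
        + lo v b * (lo v c * vdot K v d - contractFirst K v d c))
      = K a b c + lo v c * contractLast K v a b
        + lo v b * (lo v c * vdot K v a - contractFirst K v a c)
        + lo v a * (contractFirst K v b c - lo v c * vdot K v b) := by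
    rw [sum_hmix_mul]
    simp only [add_mul, sub_mul, sum_add_distrib, sum_sub_distrib, mul_assoc, ← mul_sum,
      sum_contractLast_mul_first hK, sum_vdot_mul_eq_zero hK, sum_contractFirst_mul_eq_zero hK]
    simp only [contractFirst]
    ring
  simp only [perpK, mul_assoc, ← mul_sum, hf, he, hd]
  ring

end Antisymmetric

lemma deform_add_vort (K : T3) (v : Idx → ℝ) (a b : Idx) :
    deform K v a b + vort K v a b = -contractFirst K v a b + lo v b * vdot K v a := by
  have h : ∑ c, (K c a b + K c b a) / 2 * v c + ∑ c, (K c a b - K c b a) / 2 * v c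
      = contractFirst K v a b := by
    rw [← sum_add_distrib]
    exact sum_congr rfl fun c _ => by ring
  simp only [deform, vort]
  linarith

theorem statement12_general (v : Idx → ℝ)
    (K : T3) (hK : ∀ a b c, K a b c = -K b a c) :
    ∀ a b c : Idx,
      K a b c
        = perpK K v a b c
          + (vdot K v a * lo v b - vdot K v b * lo v a) * lo v c
          + (lo v a * shear K v b c - lo v b * shear K v a c)
          + (expans K v / 3) * (lo v a * hlo v b c - lo v b * hlo v a c)
          - spinrot K v a b * lo v c
          + (lo v a * vort K v b c - lo v b * vort K v a c) := by
  intro a b c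
  rw [perpK_eq hK]
  simp only [shear, spinrot, contractLast]
  linear_combination lo v b * deform_add_vort K v a c - lo v a * deform_add_vort K v b c

/-- The contortion tensor decomposes into its spatial part and the
kinematic quantities of the preferred frame:
`K_{abc} = ⊥K_{abc} + 2 v̇_{[a} v_{b]} v_c + 2 v_{[a} σ_{b]c} + (2/3) θ v_{[a} h_{b]c}
  − κ_{ab} v_c + 2 v_{[a} Ω_{b]c}`. -/
theorem statement12 (v : Idx → ℝ) (hv : (∑ a, lo v a * v a) = -1)
    (K : T3) (hK : ∀ a b c, K a b c = -K b a c) :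
    ∀ a b c : Idx,
      K a b c
        = perpK K v a b c
          + (vdot K v a * lo v b - vdot K v b * lo v a) * lo v c
          + (lo v a * shear K v b c - lo v b * shear K v a c)
          + (expans K v / 3) * (lo v a * hlo v b c - lo v b * hlo v a c)
          - spinrot K v a b * lo v c
          + (lo v a * vort K v b c - lo v b * vort K v a c) :=
  statement12_general v K hK
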